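/- Let R be a unital *-ring and let a, b ∈ R be pseudo core invertible with pseudo core index I(a) = m. Then the following are equivalent: (1) a a^Ⓓ = b b^Ⓓ; (2) a a^Ⓓ = a a^Ⓓ b b^Ⓓ and u = a a^Ⓓ + 1 − b b^Ⓓ is invertible in R; (3) a a^Ⓓ = a a^Ⓓ b b^Ⓓ and v = a^m + 1 − b b^Ⓓ is invertible in R; (4) a a^Ⓓ commutes with b b^Ⓓ, u = a a^Ⓓ + 1 − b b^Ⓓ is invertible and s = b b^Ⓓ + 1 − a a^Ⓓ is invertible; (5) a a^Ⓓ commutes with b b^Ⓓ and w = 1 − (a a^Ⓓ − b b^Ⓓ)^2 is invertible; (6) a a^Ⓓ commutes with b b^Ⓓ and b^Ⓓ a a^Ⓓ − a^Ⓓ b b^Ⓓ = b^Ⓓ − a^Ⓓ. -/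
import Mathlib


variable {R : Type*}

/-- `x` is a `{1,3}`-inverse of `a`. -/
def Is13Inv [Ring R] [StarRing R] (a x : R) : Prop :=
  a * x * a = a ∧ star (a * x) = a * x

/-- `x` is the Moore–Penrose inverse of `a`. -/
def IsMPInv [Ring R] [StarRing R] (a x : R) : Prop :=
  a * x * a = a ∧ x * a * x = x ∧ star (a * x) = a * x ∧ star (x * a) = x * a

/-- `x` is the group inverse of `a`. -/
def IsGroupInv [Ring R] (a x : R) : Prop :=
  a * x * a = a ∧ x * a * x = x ∧ a * x = x * a

/-- `a` is EP: the group inverse and Moore–Penrose inverse of `a` exist and coincide. -/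
def IsEP [Ring R] [StarRing R] (a : R) : Prop :=
  ∃ x, IsGroupInv a x ∧ IsMPInv a x

/-- `a` is *-DMP with index `m`: `m` is the smallest positive integer with `a^m` EP. -/
def IsStarDMPWithIndex [Ring R] [StarRing R] (a : R) (m : ℕ) : Prop :=
  0 < m ∧ IsEP (a ^ m) ∧ ∀ k, 0 < k → IsEP (a ^ k) → m ≤ k

/-- `a` is *-DMP: some positive power of `a` is EP. -/
def IsStarDMP [Ring R] [StarRing R] (a : R) : Prop :=
  ∃ m, 0 < m ∧ IsEP (a ^ m)

/-- The defining equations of a Drazin inverse `x` of `a` relative to the exponent `m`. -/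
def DrazinEqs [Ring R] (a x : R) (m : ℕ) : Prop :=
  a ^ m * x * a = a ^ m ∧ x * a * x = x ∧ a * x = x * a

/-- `x` is the Drazin inverse of `a` with (minimal) index `m`. -/
def IsDrazinWithIndex [Ring R] (a x : R) (m : ℕ) : Prop :=
  0 < m ∧ DrazinEqs a x m ∧ ∀ k, 0 < k → (∃ y, DrazinEqs a y k) → m ≤ k

/-- The defining equations of a pseudo core inverse `x` of `a` relative to the exponent `m`. -/
def PCoreEqs [Ring R] [StarRing R] (a x : R) (m : ℕ) : Prop :=
  x * a ^ (m + 1) = a ^ m ∧ a * x ^ 2 = x ∧ star (a * x) = a * x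

/-- `x` is the pseudo core inverse of `a` with (minimal) index `m`. -/
def IsPCoreWithIndex [Ring R] [StarRing R] (a x : R) (m : ℕ) : Prop :=
  0 < m ∧ PCoreEqs a x m ∧ ∀ k y, 0 < k → PCoreEqs a y k → m ≤ k

/-- `x` is the pseudo core inverse of `a` (of some index). -/
def IsPCore [Ring R] [StarRing R] (a x : R) : Prop :=
  ∃ m, 0 < m ∧ PCoreEqs a x m

/-- `y` is the core inverse of `c`. -/
def IsCoreInv [Ring R] [StarRing R] (c y : R) : Prop :=
  y * c ^ 2 = c ∧ c * y ^ 2 = y ∧ star (c * y) = c * y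

/-- The core partial order `c ≤⊕ d` for a core invertible `c`. -/
def CoreLE [Ring R] [StarRing R] (c d : R) : Prop :=
  ∃ u, IsCoreInv c u ∧ u * c = u * d ∧ c * u = d * u

/-- The pseudo core order `a ≤Ⓓ b` for a pseudo core invertible `a`. -/
def PCoreLE [Ring R] [StarRing R] (a b : R) : Prop :=
  ∃ x, IsPCore a x ∧ x * a = x * b ∧ a * x = b * x

set_option linter.unusedSectionVars false

section PCoreLemmas
variable [Ring R] [StarRing R]

lemma pc_pow1 (a x : R) (hx : a * x ^ 2 = x) : ∀ k, a ^ k * x ^ (k + 1) = x := by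
  have hx' : a * (x * x) = x := by rw [← pow_two]; exact hx
  intro k
  induction k with
  | zero => simp
  | succ j ih =>
    rw [pow_succ a j, pow_succ' x (j + 1), pow_succ' x j]
    rw [pow_succ' x j] at ih
    rw [show (a ^ j * a) * (x * (x * x ^ j)) = a ^ j * ((a * (x * x)) * x ^ j) from by
      simp only [mul_assoc], hx']
    exact ih

lemma pc_pow2 (a x : R) (m : ℕ) (h1 : x * a ^ (m + 1) = a ^ m) :
    ∀ j, x ^ j * (a ^ m * a ^ j) = a ^ m := by
  intro j
  induction j with
  | zero => simp
  | succ i ih =>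
    rw [pow_succ' x i, pow_succ a i]
    rw [show (x * x ^ i) * (a ^ m * (a ^ i * a)) = x * ((x ^ i * (a ^ m * a ^ i)) * a) from by
      simp only [mul_assoc], ih, ← pow_succ, h1]

lemma pc_pow3 (a x : R) (hx : a * x ^ 2 = x) : ∀ j, a ^ (j + 1) * x ^ (j + 1) = a * x := by
  have hx' : a * (x * x) = x := by rw [← pow_two]; exact hx
  intro j
  induction j with
  | zero => simp
  | succ i ih =>
    rw [pow_succ a (i + 1), pow_succ' x (i + 1), pow_succ' x i]
    rw [pow_succ' x i] at ih
    rw [show (a ^ (i + 1) * a) * (x * (x * x ^ i)) = a ^ (i + 1) * ((a * (x * x)) * x ^ i) from by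
      simp only [mul_assoc], hx']
    exact ih

lemma pc_xax (a x : R) (m : ℕ) (hx : a * x ^ 2 = x) (h1 : x * a ^ (m + 1) = a ^ m) :
    x * (a * x) = x := by
  rw [← pc_pow3 a x hx m, ← mul_assoc, h1, pc_pow1 a x hx m]

lemma pc_ex (a x : R) (hx : a * x ^ 2 = x) : (a * x) * x = x := by
  rw [mul_assoc, ← pow_two, hx]

lemma pc_idem (a x : R) (m : ℕ) (hx : a * x ^ 2 = x) (h1 : x * a ^ (m + 1) = a ^ m) :
    (a * x) * (a * x) = a * x := by
  rw [mul_assoc, pc_xax a x m hx h1]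

lemma pc_eam (a x : R) (m : ℕ) (hx : a * x ^ 2 = x) (h1 : x * a ^ (m + 1) = a ^ m) :
    (a * x) * a ^ m = a ^ m := by
  rw [← h1]
  rw [show (a * x) * (x * a ^ (m + 1)) = (a * (x * x)) * a ^ (m + 1) from by
    simp only [mul_assoc], ← pow_two, hx]

lemma pc_epow (a x : R) (hx : a * x ^ 2 = x) (k : ℕ) : (a * x) * x ^ (k + 1) = x ^ (k + 1) := by
  rw [pow_succ' x k, ← mul_assoc, pc_ex a x hx]

lemma pc_powe (a x : R) (m : ℕ) (hx : a * x ^ 2 = x) (h1 : x * a ^ (m + 1) = a ^ m) (k : ℕ) :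
    x ^ (k + 1) * (a * x) = x ^ (k + 1) := by
  rw [pow_succ x k, mul_assoc, pc_xax a x m hx h1]

lemma my_sub_cancel_right {A B C : R} (h : A - B = C - B) : A = C := by
  have := congrArg (· + B) h; simpa using this

lemma my_sub_cancel_left {A B C : R} (h : A - B = A - C) : B = C := by
  have := congrArg (fun z => A - z) h; simpa using this

lemma imp13unit (t s e : R) (h1 : t * s = e) (ht : e * t = t) (hs2 : e * s = s)
    (h4 : s * (t * t) = t) (h7 : s * e = s) : IsUnit (t + 1 - e) := by
  have h1' : t * (s * t) = t := by rw [← mul_assoc, h1, ht]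
  have h2' : e * (s * t) = s * t := by rw [← mul_assoc, hs2]
  have h3 : s * (t * e) = e := by
    rw [← h1, show s * (t * (t * s)) = (s * (t * t)) * s from by simp only [mul_assoc], h4]
  have p1 : (t + 1 - e) * (s + 1 - s * t) = 1 := by
    rw [show (t + 1 - e) * (s + 1 - s * t)
        = t * s + t - t * (s * t) + s + 1 - s * t - e * s - e + e * (s * t) from by noncomm_ring,
      h1, h1', h2', hs2]
    abel
  have p2 : (s + 1 - s * t) * (t + 1 - e) = 1 := by
    rw [show (s + 1 - s * t) * (t + 1 - e)
        = s * t + s - s * e + t + 1 - e - s * (t * t) - s * t + s * (t * e) from by noncomm_ring,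
      h7, h4, h3]
    abel
  exact ⟨⟨t + 1 - e, s + 1 - s * t, p1, p2⟩, rfl⟩

lemma imp51 (e f : R) (he2 : e * e = e) (hf2 : f * f = f) (hc : e * f = f * e)
    (hw : IsUnit (1 - (e - f) ^ 2)) : e = f := by
  have ex2 : e * f * e = e * f := by rw [mul_assoc, ← hc, ← mul_assoc, he2]
  have ex3 : f * e * e = e * f := by rw [← hc]; exact ex2
  have ex4 : f * f * e = e * f := by rw [hf2, hc]
  have ex5 : e * e * e = e := by rw [he2, he2]
  have hwe : (1 - (e - f) ^ 2) * e = e * f := by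
    rw [show (1 - (e - f) ^ 2) * e = e - e * e * e + e * f * e + f * e * e - f * f * e from by
      noncomm_ring, ex5, ex2, ex3, ex4]
    abel
  have ex6 : e * e * f = e * f := by rw [he2]
  have ex7 : e * f * f = e * f := by rw [mul_assoc, hf2]
  have ex8 : f * e * f = e * f := by rw [← hc]; exact ex7
  have ex9 : f * f * f = f := by rw [hf2, hf2]
  have hwf : (1 - (e - f) ^ 2) * f = e * f := by
    rw [show (1 - (e - f) ^ 2) * f = f - e * e * f + e * f * f + f * e * f - f * f * f from by
      noncomm_ring, ex6, ex7, ex8, ex9]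
    abel
  exact hw.mul_left_cancel (hwe.trans hwf.symm)

end PCoreLemmas

/-- Theorem 5.2: characterizations of `a a^Ⓓ = b b^Ⓓ`, where `p` is the pseudo core
inverse of `a` with index `m = I(a)` and `q` is the pseudo core inverse of `b`. -/
theorem stmt_19 [Ring R] [StarRing R] (a b p q : R) (m : ℕ)
    (hp : IsPCoreWithIndex a p m) (hq : IsPCore b q) :
    List.TFAE
      [ a * p = b * q,
        a * p = a * p * (b * q) ∧ IsUnit (a * p + 1 - b * q),
        a * p = a * p * (b * q) ∧ IsUnit (a ^ m + 1 - b * q),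
        (a * p) * (b * q) = (b * q) * (a * p) ∧
          IsUnit (a * p + 1 - b * q) ∧ IsUnit (b * q + 1 - a * p),
        (a * p) * (b * q) = (b * q) * (a * p) ∧
          IsUnit (1 - (a * p - b * q) ^ 2),
        (a * p) * (b * q) = (b * q) * (a * p) ∧
          q * (a * p) - p * (b * q) = q - p ] := by
  obtain ⟨hm, ⟨hp1, hp2, hp3⟩, -⟩ := hp
  obtain ⟨n, hn, hq1, hq2, hq3⟩ := hq
  obtain ⟨k, rfl⟩ := Nat.exists_eq_succ_of_ne_zero hm.ne'
  have he2 : (a * p) * (a * p) = a * p := pc_idem a p _ hp2 hp1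
  have hf2 : (b * q) * (b * q) = b * q := pc_idem b q _ hq2 hq1
  have hpe : p * (a * p) = p := pc_xax a p _ hp2 hp1
  have hqf : q * (b * q) = q := pc_xax b q _ hq2 hq1
  have heam : (a * p) * a ^ (k + 1) = a ^ (k + 1) := pc_eam a p _ hp2 hp1
  have starfe : a * p = a * p * (b * q) → (b * q) * (a * p) = a * p := by
    intro h1
    have h' := congrArg star h1
    rw [hp3, star_mul, hq3, hp3] at h'
    exact h'.symm
  tfae_have 1 → 2 := by
    intro h
    refine ⟨by rw [← h]; exact he2.symm, ?_⟩
    rw [← h, add_sub_cancel_left]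
    exact isUnit_one
  tfae_have 2 → 1 := by
    rintro ⟨h1, hu⟩
    have hfe := starfe h1
    have c1 : (a * p + 1 - b * q) * (a * p) = a * p := by
      rw [show (a * p + 1 - b * q) * (a * p)
          = (a * p) * (a * p) + (a * p) - (b * q) * (a * p) from by noncomm_ring,
        he2, hfe, add_sub_cancel_right]
    have c2 : (a * p + 1 - b * q) * (b * q) = a * p := by
      rw [show (a * p + 1 - b * q) * (b * q)
          = (a * p) * (b * q) + (b * q) - (b * q) * (b * q) from by noncomm_ring,
        hf2, ← h1, add_sub_cancel_right]
    exact hu.mul_left_cancel (c1.trans c2.symm)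
  tfae_have 1 → 3 := by
    intro h
    refine ⟨by rw [← h]; exact he2.symm, ?_⟩
    rw [← h]
    exact imp13unit (a ^ (k + 1)) (p ^ (k + 1)) (a * p) (pc_pow3 a p hp2 k) heam
      (pc_epow a p hp2 k) (pc_pow2 a p (k + 1) hp1 (k + 1)) (pc_powe a p (k + 1) hp2 hp1 k)
  tfae_have 3 → 1 := by
    rintro ⟨h1, hv⟩
    have hfe := starfe h1
    have d1 : (a * p) * (a ^ (k + 1) + 1 - b * q) = a ^ (k + 1) := by
      rw [mul_sub, mul_add, mul_one, heam, ← h1, add_sub_cancel_right]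
    have d2 : (b * q) * (a ^ (k + 1) + 1 - b * q) = a ^ (k + 1) := by
      have e1 : (b * q) * a ^ (k + 1) = a ^ (k + 1) := by
        calc (b * q) * a ^ (k + 1) = (b * q) * ((a * p) * a ^ (k + 1)) := by rw [heam]
          _ = ((b * q) * (a * p)) * a ^ (k + 1) := (mul_assoc _ _ _).symm
          _ = (a * p) * a ^ (k + 1) := by rw [hfe]
          _ = a ^ (k + 1) := heam
      rw [mul_sub, mul_add, mul_one, hf2, e1, add_sub_cancel_right]
    exact hv.mul_right_cancel (d1.trans d2.symm)
  tfae_have 1 → 4 := by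
    intro h
    exact ⟨by rw [← h], by rw [← h, add_sub_cancel_left]; exact isUnit_one,
      by rw [← h, add_sub_cancel_left]; exact isUnit_one⟩
  tfae_have 4 → 5 := by
    rintro ⟨hc, hu, hs⟩
    refine ⟨hc, ?_⟩
    have key : (a * p + 1 - b * q) * (b * q + 1 - a * p) = 1 - (a * p - b * q) ^ 2 := by
      noncomm_ring
    exact key ▸ (hu.mul hs)
  tfae_have 5 → 1 := by
    rintro ⟨hc, hw⟩
    exact imp51 _ _ he2 hf2 hc hw
  tfae_have 1 → 6 := by
    intro h
    refine ⟨by rw [← h], ?_⟩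
    have l1 : q * (a * p) = q := by rw [h]; exact hqf
    have l2 : p * (b * q) = p := by rw [← h]; exact hpe
    rw [l1, l2]
  tfae_have 6 → 1 := by
    rintro ⟨hc, h6⟩
    have H1 : (b * q) * (a * p) * (b * q) - (b * p) * ((b * q) * (b * q))
        = (b * q) * (b * q) - (b * p) * (b * q) := by
      calc (b * q) * (a * p) * (b * q) - (b * p) * ((b * q) * (b * q))
          = b * (q * (a * p) - p * (b * q)) * (b * q) := by noncomm_ring
        _ = b * (q - p) * (b * q) := by rw [h6]
        _ = (b * q) * (b * q) - (b * p) * (b * q) := by noncomm_ring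
    rw [hf2] at H1
    have H1' : (b * q) * (a * p) * (b * q) = b * q := my_sub_cancel_right H1
    have H1'' : (b * q) * (a * p) * (b * q) = (a * p) * (b * q) := by
      rw [← hc, mul_assoc (a * p) (b * q) (b * q), hf2]
    have hef_f : (a * p) * (b * q) = b * q := H1''.symm.trans H1'
    have H2 : (a * q) * ((a * p) * (a * p)) - (a * p) * (b * q) * (a * p)
        = (a * q) * (a * p) - (a * p) * (a * p) := by
      calc (a * q) * ((a * p) * (a * p)) - (a * p) * (b * q) * (a * p)
          = a * (q * (a * p) - p * (b * q)) * (a * p) := by noncomm_ring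
        _ = a * (q - p) * (a * p) := by rw [h6]
        _ = (a * q) * (a * p) - (a * p) * (a * p) := by noncomm_ring
    rw [he2] at H2
    have H2' : (a * p) * (b * q) * (a * p) = a * p := my_sub_cancel_left H2
    have H2'' : (a * p) * (b * q) * (a * p) = (a * p) * (b * q) := by
      rw [mul_assoc (a * p) (b * q) (a * p), ← hc, ← mul_assoc (a * p) (a * p) (b * q), he2]
    have hef_e : (a * p) * (b * q) = a * p := H2''.symm.trans H2'
    exact hef_e.symm.trans hef_f
  tfae_finish
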